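/- arXiv:2510.14394 — 3 statements merged into one kernel-verified Lean document; each statement's English description precedes it below -/
import Mathlib

section
/- Suppose 𝗃 > 0 satisfies J_1(𝗃) = 0 and J_1(r) > 0 for all r ∈ (0, 𝗃). Then ∫₀¹ r³ J_0(𝗃 r) dr = -(2/𝗃⁴) ∫₀^𝗃 r² J_1(r) dr < 0. -/
open MeasureTheory intervalIntegral

/-- The Bessel function of the first kind of order `n`. -/
noncomputable def besselJ (n : ℕ) (s : ℝ) : ℝ :=
  ∑' i : ℕ, (-1 : ℝ) ^ i / ((Nat.factorial i : ℝ) * (Nat.factorial (n + i) : ℝ)) *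
    (s / 2) ^ (n + 2 * i)

lemma besselJ_term_bound (n : ℕ) (R : ℝ) (i : ℕ) (s : ℝ) (hs : |s| ≤ R) :
    ‖(-1 : ℝ) ^ i / ((Nat.factorial i : ℝ) * (Nat.factorial (n + i) : ℝ)) *
      (s / 2) ^ (n + 2 * i)‖ ≤ (R / 2) ^ n * ((R ^ 2 / 4) ^ i / (Nat.factorial i : ℝ)) := by
  have h0R : 0 ≤ R := (abs_nonneg s).trans hs
  have hf1 : (1 : ℝ) ≤ (Nat.factorial (n + i) : ℝ) := by
    exact_mod_cast Nat.one_le_iff_ne_zero.mpr (Nat.factorial_ne_zero _)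
  have hf2 : (0 : ℝ) < (Nat.factorial i : ℝ) := by exact_mod_cast Nat.factorial_pos i
  have h1 : ‖(s / 2) ^ (n + 2 * i)‖ ≤ (R / 2) ^ (n + 2 * i) := by
    rw [norm_pow, Real.norm_eq_abs, abs_div, abs_two]
    exact pow_le_pow_left₀ (by positivity) (by linarith [div_le_div_of_nonneg_right (c := 2) hs (by norm_num)]) _
  have h2 : ‖(-1 : ℝ) ^ i / ((Nat.factorial i : ℝ) * (Nat.factorial (n + i) : ℝ))‖
      ≤ 1 / (Nat.factorial i : ℝ) := by
    rw [norm_div, norm_pow, norm_neg, norm_one, one_pow, Real.norm_eq_abs,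
      abs_of_pos (by positivity)]
    apply one_div_le_one_div_of_le hf2
    exact le_mul_of_one_le_right hf2.le hf1
  calc ‖(-1 : ℝ) ^ i / ((Nat.factorial i : ℝ) * (Nat.factorial (n + i) : ℝ)) *
      (s / 2) ^ (n + 2 * i)‖
      = ‖(-1 : ℝ) ^ i / ((Nat.factorial i : ℝ) * (Nat.factorial (n + i) : ℝ))‖ *
        ‖(s / 2) ^ (n + 2 * i)‖ := norm_mul _ _
    _ ≤ (1 / (Nat.factorial i : ℝ)) * (R / 2) ^ (n + 2 * i) :=
        mul_le_mul h2 h1 (norm_nonneg _) (by positivity)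
    _ = (R / 2) ^ n * ((R ^ 2 / 4) ^ i / (Nat.factorial i : ℝ)) := by
        rw [pow_add, pow_mul]
        have : ((R / 2) ^ 2) = R ^ 2 / 4 := by ring
        rw [this]; ring

lemma continuous_besselJ (n : ℕ) : Continuous (besselJ n) := by
  rw [continuous_iff_continuousAt]
  intro x
  set R : ℝ := |x| + 1 with hRdef
  have hx : x ∈ Metric.ball (0 : ℝ) R := by
    simp only [Metric.mem_ball, Real.dist_eq, sub_zero, hRdef]
    linarith
  have hcont : ContinuousOn (besselJ n) (Metric.ball (0 : ℝ) R) := by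
    have : besselJ n = fun s : ℝ => ∑' i : ℕ,
        (-1 : ℝ) ^ i / ((Nat.factorial i : ℝ) * (Nat.factorial (n + i) : ℝ)) *
          (s / 2) ^ (n + 2 * i) := rfl
    rw [this]
    apply continuousOn_tsum
      (u := fun i : ℕ => (R / 2) ^ n * ((R ^ 2 / 4) ^ i / (Nat.factorial i : ℝ)))
    · intro i
      exact (Continuous.continuousOn (by continuity))
    · exact (Real.summable_pow_div_factorial _).mul_left _
    · intro i s hs
      apply besselJ_term_bound
      rw [Metric.mem_ball, Real.dist_eq, sub_zero] at hs
      exact hs.le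
  exact hcont.continuousAt (Metric.isOpen_ball.mem_nhds hx)

lemma hasDerivAt_id_mul_besselJ_one (r : ℝ) :
    HasDerivAt (fun s : ℝ => s * besselJ 1 s) (r * besselJ 0 r) r := by
  set R : ℝ := |r| + 1 with hRdef
  have hR0 : 0 < R := by positivity
  set c : ℕ → ℝ := fun i => (-1 : ℝ) ^ i /
    ((Nat.factorial i : ℝ) * (Nat.factorial (1 + i) : ℝ) * 2 ^ (1 + 2 * i)) with hc
  set d : ℕ → ℝ := fun i => (-1 : ℝ) ^ i /
    ((Nat.factorial i : ℝ) * (Nat.factorial i : ℝ) * 2 ^ (2 * i)) with hd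
  have hcd : ∀ i : ℕ, c i * (2 * (i : ℝ) + 2) = d i := by
    intro i
    have hfs : (Nat.factorial (1 + i) : ℝ) = ((i : ℝ) + 1) * (Nat.factorial i : ℝ) := by
      rw [add_comm 1 i]; exact_mod_cast Nat.factorial_succ i
    have h1 : (Nat.factorial i : ℝ) ≠ 0 := Nat.cast_ne_zero.mpr (Nat.factorial_ne_zero i)
    have h2 : (2 : ℝ) ^ (1 + 2 * i) = 2 * 2 ^ (2 * i) := by rw [pow_add]; ring
    have h3 : ((i : ℝ) + 1) ≠ 0 := by positivity
    simp only [hc, hd, hfs, h2]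
    field_simp
  have hsum1 : ∀ s : ℝ, (∑' i : ℕ, c i * s ^ (2 * i + 2)) = s * besselJ 1 s := by
    intro s
    rw [besselJ, ← tsum_mul_left]
    apply tsum_congr
    intro i
    have h1 : (Nat.factorial i : ℝ) ≠ 0 := Nat.cast_ne_zero.mpr (Nat.factorial_ne_zero i)
    have h1' : (Nat.factorial (1 + i) : ℝ) ≠ 0 := Nat.cast_ne_zero.mpr (Nat.factorial_ne_zero _)
    simp only [hc, div_pow]
    field_simp
    ring
  have hsum0 : ∀ s : ℝ, (∑' i : ℕ, d i * s ^ (2 * i + 1)) = s * besselJ 0 s := by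
    intro s
    rw [besselJ, ← tsum_mul_left]
    apply tsum_congr
    intro i
    have h1 : (Nat.factorial i : ℝ) ≠ 0 := Nat.cast_ne_zero.mpr (Nat.factorial_ne_zero i)
    simp only [hd, div_pow, Nat.zero_add, zero_add]
    field_simp
    ring
  have hg : ∀ (i : ℕ) (y : ℝ), y ∈ Set.Ioo (-R) R →
      HasDerivAt (fun z : ℝ => c i * z ^ (2 * i + 2)) (d i * y ^ (2 * i + 1)) y := by
    intro i y _
    have h1 := (hasDerivAt_pow (2 * i + 2) y).const_mul (c i)
    refine h1.congr_deriv ?_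
    have : 2 * i + 2 - 1 = 2 * i + 1 := rfl
    rw [this, ← hcd i]
    push_cast
    ring
  have hg' : ∀ (i : ℕ) (y : ℝ), y ∈ Set.Ioo (-R) R →
      ‖d i * y ^ (2 * i + 1)‖ ≤ R * ((R ^ 2 / 4) ^ i / (Nat.factorial i : ℝ)) := by
    intro i y hy
    have hyR : |y| ≤ R := abs_le.mpr ⟨hy.1.le, hy.2.le⟩
    have hf2 : (0 : ℝ) < (Nat.factorial i : ℝ) := by exact_mod_cast Nat.factorial_pos i
    have hf1 : (1 : ℝ) ≤ (Nat.factorial i : ℝ) := by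
      exact_mod_cast Nat.one_le_iff_ne_zero.mpr (Nat.factorial_ne_zero i)
    rw [norm_mul]
    have h1 : ‖d i‖ ≤ 1 / ((Nat.factorial i : ℝ) * 2 ^ (2 * i)) := by
      simp only [hd]
      rw [norm_div, norm_pow, norm_neg, norm_one, one_pow, Real.norm_eq_abs,
        abs_of_pos (by positivity)]
      apply one_div_le_one_div_of_le (by positivity)
      have h2 : (0 : ℝ) < 2 ^ (2 * i) := by positivity
      exact mul_le_mul_of_nonneg_right (le_mul_of_one_le_left hf2.le hf1) h2.le
    have h2 : ‖y ^ (2 * i + 1)‖ ≤ R ^ (2 * i + 1) := by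
      rw [norm_pow, Real.norm_eq_abs]
      exact pow_le_pow_left₀ (abs_nonneg y) hyR _
    calc ‖d i‖ * ‖y ^ (2 * i + 1)‖
        ≤ (1 / ((Nat.factorial i : ℝ) * 2 ^ (2 * i))) * R ^ (2 * i + 1) :=
          mul_le_mul h1 h2 (norm_nonneg _) (by positivity)
      _ = R * ((R ^ 2 / 4) ^ i / (Nat.factorial i : ℝ)) := by
          have h4 : (R ^ 2 / 4) ^ i = R ^ (2 * i) / 2 ^ (2 * i) := by
            rw [div_pow, pow_mul, pow_mul]
            norm_num
          rw [h4, pow_add]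
          field_simp
  have hg0 : Summable (fun i : ℕ => c i * (0 : ℝ) ^ (2 * i + 2)) :=
    summable_zero.congr fun i => by simp
  have hu : Summable (fun i : ℕ => R * ((R ^ 2 / 4) ^ i / (Nat.factorial i : ℝ))) :=
    (Real.summable_pow_div_factorial _).mul_left _
  have hrmem : r ∈ Set.Ioo (-R) R := by
    constructor
    · have := neg_abs_le r; simp only [hRdef]; linarith
    · have := le_abs_self r; simp only [hRdef]; linarith
  have h0mem : (0 : ℝ) ∈ Set.Ioo (-R) R := by constructor <;> linarith
  have hDeriv := hasDerivAt_tsum_of_isPreconnected hu isOpen_Ioo isPreconnected_Ioo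
    hg hg' h0mem hg0 hrmem
  have hfun : (fun z : ℝ => ∑' i : ℕ, c i * z ^ (2 * i + 2)) =
      fun s : ℝ => s * besselJ 1 s := funext hsum1
  rw [hfun, hsum0 r] at hDeriv
  exact hDeriv

/-- If `𝗃 > 0` is a zero of `J₁` and `J₁ > 0` on `(0, 𝗃)`, then
`∫₀¹ r³ J₀(𝗃 r) dr = -(2/𝗃⁴) ∫₀^𝗃 r² J₁(r) dr < 0`. -/
theorem integral_cube_besselJ_zero_neg (j : ℝ) (hj : 0 < j) (hzero : besselJ 1 j = 0)
    (hpos : ∀ r ∈ Set.Ioo (0 : ℝ) j, 0 < besselJ 1 r) :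
    (∫ r in (0:ℝ)..1, r ^ 3 * besselJ 0 (j * r)) =
      -(2 / j ^ 4) * ∫ r in (0:ℝ)..j, r ^ 2 * besselJ 1 r ∧
    (∫ r in (0:ℝ)..1, r ^ 3 * besselJ 0 (j * r)) < 0 := by
  have hcont0 := continuous_besselJ 0
  have hcont1 := continuous_besselJ 1
  have hjne : j ≠ 0 := hj.ne'
  -- substitution
  have hcomp := intervalIntegral.integral_comp_mul_left (a := (0:ℝ)) (b := 1)
    (fun u : ℝ => u ^ 3 * besselJ 0 u) hjne
  simp only [mul_zero, mul_one, smul_eq_mul] at hcomp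
  have step1 : (∫ r in (0:ℝ)..1, r ^ 3 * besselJ 0 (j * r))
      = j⁻¹ ^ 4 * ∫ u in (0:ℝ)..j, u ^ 3 * besselJ 0 u := by
    calc (∫ r in (0:ℝ)..1, r ^ 3 * besselJ 0 (j * r))
        = ∫ r in (0:ℝ)..1, j⁻¹ ^ 3 * ((j * r) ^ 3 * besselJ 0 (j * r)) := by
          apply intervalIntegral.integral_congr
          intro x _
          field_simp
      _ = j⁻¹ ^ 3 * ∫ r in (0:ℝ)..1, (j * r) ^ 3 * besselJ 0 (j * r) :=
          intervalIntegral.integral_const_mul _ _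
      _ = j⁻¹ ^ 3 * (j⁻¹ * ∫ u in (0:ℝ)..j, u ^ 3 * besselJ 0 u) := by rw [hcomp]
      _ = j⁻¹ ^ 4 * ∫ u in (0:ℝ)..j, u ^ 3 * besselJ 0 u := by ring
  -- integrability
  have hint1 : IntervalIntegrable (fun u : ℝ => u ^ 2 * besselJ 1 u) volume 0 j :=
    ((continuous_pow 2).mul hcont1).intervalIntegrable _ _
  have hint0 : IntervalIntegrable (fun u : ℝ => u ^ 3 * besselJ 0 u) volume 0 j :=
    ((continuous_pow 3).mul hcont0).intervalIntegrable _ _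
  -- FTC
  have hG : ∀ u ∈ Set.uIcc (0:ℝ) j, HasDerivAt (fun s : ℝ => s ^ 2 * (s * besselJ 1 s))
      (2 * (u ^ 2 * besselJ 1 u) + u ^ 3 * besselJ 0 u) u := by
    intro u _
    have h1 := (hasDerivAt_pow 2 u).mul (hasDerivAt_id_mul_besselJ_one u)
    refine h1.congr_deriv ?_
    push_cast
    ring
  have hintsum : IntervalIntegrable
      (fun u : ℝ => 2 * (u ^ 2 * besselJ 1 u) + u ^ 3 * besselJ 0 u) volume 0 j :=
    (hint1.const_mul 2).add hint0
  have hFTC := intervalIntegral.integral_eq_sub_of_hasDerivAt hG hintsum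
  have key : 2 * (∫ u in (0:ℝ)..j, u ^ 2 * besselJ 1 u)
      + (∫ u in (0:ℝ)..j, u ^ 3 * besselJ 0 u) = 0 := by
    rw [← intervalIntegral.integral_const_mul,
      ← intervalIntegral.integral_add (hint1.const_mul 2) hint0, hFTC, hzero]
    ring
  -- positivity
  have hpos2 : 0 < ∫ u in (0:ℝ)..j, u ^ 2 * besselJ 1 u :=
    intervalIntegral_pos_of_pos_on hint1
      (fun x hx => mul_pos (pow_pos hx.1 2) (hpos x hx)) hj
  have step2 : (∫ u in (0:ℝ)..j, u ^ 3 * besselJ 0 u)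
      = -2 * ∫ u in (0:ℝ)..j, u ^ 2 * besselJ 1 u := by linarith
  constructor
  · rw [step1, step2]
    field_simp
  · rw [step1, step2]
    have hj4 : (0:ℝ) < j⁻¹ ^ 4 := by positivity
    nlinarith
end

section
/- Let H be a real Hilbert space, T a compact self-adjoint positive-definite operator with top two distinct eigenvalues Λ₁⁻¹ > Λ₂⁻¹ > 0 and P₁ the projection onto the top eigenspace. If v, w ∈ H satisfy ⟨v, Tv⟩ - Λ₁⁻¹‖v‖² = ⟨w, Tw⟩ - Λ₁⁻¹‖w‖², then ‖w - P₁w‖² ≤ (Λ₂/(Λ₂ - Λ₁)) ‖v - P₁v‖², where Λ_i are the reciprocals of the eigenvalues. -/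
open scoped RealInnerProductSpace

open Filter Topology

set_option maxHeartbeats 1000000
set_option synthInstance.maxHeartbeats 400000

/-- For a self-adjoint positive operator `A`, `‖A x‖² ≤ ‖A‖ ⟪x, A x⟫`. -/
lemma aux_apply_norm_sq_le {K : Type*} [NormedAddCommGroup K] [InnerProductSpace ℝ K]
    (A : K →L[ℝ] K) (hsym : ∀ x y : K, ⟪A x, y⟫ = ⟪x, A y⟫)
    (hpos : ∀ x : K, 0 ≤ ⟪x, A x⟫) (x : K) :
    ‖A x‖ ^ 2 ≤ ‖A‖ * ⟪x, A x⟫ := by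
  rcases eq_or_lt_of_le (norm_nonneg A) with h0 | hA
  · have hA0 : A = 0 := by
      have := h0.symm
      rwa [norm_eq_zero] at this
    simp [hA0]
  · have h0 := hpos (x - (‖A‖)⁻¹ • A x)
    have hAA : ⟪A x, A (A x)⟫ ≤ ‖A‖ * ‖A x‖ ^ 2 := by
      calc ⟪A x, A (A x)⟫ ≤ ‖A x‖ * ‖A (A x)‖ := real_inner_le_norm _ _
        _ ≤ ‖A x‖ * (‖A‖ * ‖A x‖) := by
            have := A.le_opNorm (A x)
            exact mul_le_mul_of_nonneg_left this (norm_nonneg _)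
        _ = ‖A‖ * ‖A x‖ ^ 2 := by ring
    have hx2 : ⟪x, A (A x)⟫ = ‖A x‖ ^ 2 := by
      rw [← hsym]
      exact real_inner_self_eq_norm_sq _
    have hAxAx : ⟪A x, A x⟫ = ‖A x‖ ^ 2 := real_inner_self_eq_norm_sq _
    have expand : ⟪x - (‖A‖)⁻¹ • A x, A (x - (‖A‖)⁻¹ • A x)⟫
        = ⟪x, A x⟫ - 2 * (‖A‖)⁻¹ * ‖A x‖ ^ 2 + (‖A‖)⁻¹ ^ 2 * ⟪A x, A (A x)⟫ := by
      simp only [map_sub, map_smul, inner_sub_left, inner_sub_right,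
        real_inner_smul_left, real_inner_smul_right]
      rw [hx2, hAxAx]
      ring
    rw [expand] at h0
    have hAne : (‖A‖ : ℝ) ≠ 0 := ne_of_gt hA
    have hinv : ‖A‖ * ‖A‖⁻¹ = 1 := mul_inv_cancel₀ hAne
    have h0' : 0 ≤ ‖A‖ ^ 2 * (⟪x, A x⟫ - 2 * (‖A‖)⁻¹ * ‖A x‖ ^ 2
        + (‖A‖)⁻¹ ^ 2 * ⟪A x, A (A x)⟫) := mul_nonneg (by positivity) h0
    have hexp : ‖A‖ ^ 2 * (⟪x, A x⟫ - 2 * (‖A‖)⁻¹ * ‖A x‖ ^ 2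
        + (‖A‖)⁻¹ ^ 2 * ⟪A x, A (A x)⟫)
        = ‖A‖ ^ 2 * ⟪x, A x⟫ - 2 * ‖A‖ * ‖A x‖ ^ 2 + ⟪A x, A (A x)⟫ := by
      field_simp
    rw [hexp] at h0'
    nlinarith [h0', hAA, hA]

/-- A nonzero compact self-adjoint positive operator has `‖A‖` as an eigenvalue. -/
lemma aux_exists_eigenvector {K : Type*} [NormedAddCommGroup K] [InnerProductSpace ℝ K]
    (A : K →L[ℝ] K) (hcomp : IsCompactOperator A)
    (hsym : ∀ x y : K, ⟪A x, y⟫ = ⟪x, A y⟫)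
    (hpos : ∀ x : K, 0 ≤ ⟪x, A x⟫) (hA : A ≠ 0) :
    ∃ x : K, x ≠ 0 ∧ A x = ‖A‖ • x := by
  have hμpos : (0:ℝ) < ‖A‖ := norm_pos_iff.mpr hA
  set μ := ‖A‖ with hμdef
  -- a maximizing sequence on the unit sphere
  have hseq : ∀ n : ℕ, ∃ x : K, ‖x‖ = 1 ∧ μ - min ((1:ℝ)/(n+1)) (μ/2) < ‖A x‖ := by
    intro n
    have hεpos : (0:ℝ) < min ((1:ℝ)/(n+1)) (μ/2) := lt_min (by positivity) (by positivity)
    have hr : μ - min ((1:ℝ)/(n+1)) (μ/2) < μ := by linarith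
    obtain ⟨x, hx1, hx2⟩ := A.exists_lt_apply_of_lt_opNorm hr
    have hlow : (0:ℝ) < μ - min ((1:ℝ)/(n+1)) (μ/2) := by
      have : min (1/(n+1:ℝ)) (μ/2) ≤ μ/2 := min_le_right _ _
      linarith
    have hx0 : x ≠ 0 := by
      intro h
      rw [h] at hx2
      simp at hx2
      linarith
    have hxn : ‖x‖ ≠ 0 := norm_ne_zero_iff.mpr hx0
    refine ⟨‖x‖⁻¹ • x, ?_, ?_⟩
    · rw [norm_smul, norm_inv, norm_norm, inv_mul_cancel₀ hxn]
    · rw [map_smul, norm_smul, norm_inv, norm_norm]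
      have h1 : ‖A x‖ ≤ ‖x‖⁻¹ * ‖A x‖ := by
        have hxpos : 0 < ‖x‖ := lt_of_le_of_ne (norm_nonneg x) (Ne.symm hxn)
        have : (1:ℝ) ≤ ‖x‖⁻¹ := by
          rw [le_inv_comm₀ one_pos hxpos]
          simpa using hx1.le
        nlinarith [norm_nonneg (A x)]
      linarith
  choose x hx1 hx2 using hseq
  -- the defect `A xₙ - μ xₙ` tends to zero
  have hkey : ∀ n : ℕ, ‖A (x n) - μ • x n‖ ^ 2 ≤ 2 * μ * (1/(n+1)) := by
    intro n
    set ε := min (1/(n+1:ℝ)) (μ/2) with hεdef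
    have hε1 : ε ≤ 1/(n+1:ℝ) := min_le_left _ _
    have hεpos : (0:ℝ) < ε := lt_min (by positivity) (by positivity)
    have hray : μ - 2*ε ≤ ⟪x n, A (x n)⟫ := by
      have hb := aux_apply_norm_sq_le A hsym hpos (x n)
      have h2 : (μ - ε)^2 ≤ ‖A (x n)‖^2 := by
        have h5 := (hx2 n).le
        have h6 : ε ≤ μ/2 := min_le_right _ _
        nlinarith [norm_nonneg (A (x n)), hμpos]
      nlinarith [hb, h2, hμpos]
    have hub : ⟪x n, A (x n)⟫ ≤ μ := by
      calc ⟪x n, A (x n)⟫ ≤ ‖x n‖ * ‖A (x n)‖ := real_inner_le_norm _ _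
        _ ≤ ‖x n‖ * (μ * ‖x n‖) := by
            exact mul_le_mul_of_nonneg_left (A.le_opNorm _) (norm_nonneg _)
        _ = μ := by rw [hx1 n]; ring
    have hb := aux_apply_norm_sq_le A hsym hpos (x n)
    have hexp : ‖A (x n) - μ • x n‖ ^ 2
        = ‖A (x n)‖^2 - 2*μ*⟪x n, A (x n)⟫ + μ^2 := by
      rw [norm_sub_sq_real]
      rw [real_inner_smul_right, norm_smul, real_inner_comm]
      rw [hx1 n]
      simp [abs_of_pos hμpos]
      ring
    rw [hexp]
    nlinarith [hb, hray, hub, hμpos, hε1, hεpos]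
  have htend0 : Tendsto (fun n => A (x n) - μ • x n) atTop (𝓝 0) := by
    have hble : ∀ n : ℕ, ‖A (x n) - μ • x n‖ ≤ Real.sqrt (2*μ*((1:ℝ)/(n+1))) := by
      intro n
      have h := hkey n
      have heq : ‖A (x n) - μ • x n‖ = Real.sqrt (‖A (x n) - μ • x n‖^2) := by
        rw [Real.sqrt_sq (norm_nonneg _)]
      rw [heq]
      exact Real.sqrt_le_sqrt h
    have hg : Tendsto (fun n : ℕ => Real.sqrt (2*μ*((1:ℝ)/(n+1)))) atTop (𝓝 0) := by
      have h1 : Tendsto (fun n : ℕ => 2*μ*((1:ℝ)/(n+1))) atTop (𝓝 0) := by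
        have := tendsto_one_div_add_atTop_nhds_zero_nat (𝕜 := ℝ)
        have h2 := this.const_mul (2*μ)
        simpa using h2
      have := (Real.continuous_sqrt.tendsto 0).comp h1
      simpa [Function.comp_def] using this
    exact squeeze_zero_norm hble hg
  -- compactness: extract a convergent subsequence of `A xₙ`
  have hS : IsCompact (closure (A '' Metric.closedBall 0 1)) := by
    exact hcomp.isCompact_closure_image_closedBall (𝕜₁ := ℝ) 1
  have hmem : ∀ n, A (x n) ∈ closure (A '' Metric.closedBall 0 1) := by
    intro n
    apply subset_closure
    exact ⟨x n, by simp [Metric.mem_closedBall, hx1 n], rfl⟩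
  obtain ⟨y, -, φ, hφ, hconv⟩ := hS.tendsto_subseq hmem
  have htend0' : Tendsto (fun n => A (x (φ n)) - μ • x (φ n)) atTop (𝓝 0) :=
    htend0.comp hφ.tendsto_atTop
  have hxconv : Tendsto (fun n => μ • x (φ n)) atTop (𝓝 y) := by
    have h := hconv.sub htend0'
    simpa using h
  have hxc : Tendsto (fun n => x (φ n)) atTop (𝓝 (μ⁻¹ • y)) := by
    have h := hxconv.const_smul μ⁻¹
    have heq : (fun n => μ⁻¹ • μ • x (φ n)) = fun n => x (φ n) := by
      funext n
      rw [smul_smul, inv_mul_cancel₀ (ne_of_gt hμpos), one_smul]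
    rwa [heq] at h
  set xlim := μ⁻¹ • y with hxlim
  have hy : y = μ • xlim := by
    rw [hxlim, smul_smul, mul_inv_cancel₀ (ne_of_gt hμpos), one_smul]
  have hnorm1 : ‖xlim‖ = 1 := by
    have h1 : Tendsto (fun n => ‖x (φ n)‖) atTop (𝓝 ‖xlim‖) := hxc.norm
    have h2 : Tendsto (fun n => ‖x (φ n)‖) atTop (𝓝 1) := by
      have : (fun n => ‖x (φ n)‖) = fun _ => (1:ℝ) := by
        funext n; exact hx1 (φ n)
      rw [this]; exact tendsto_const_nhds
    exact tendsto_nhds_unique h1 h2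
  refine ⟨xlim, ?_, ?_⟩
  · intro h
    rw [h, norm_zero] at hnorm1
    exact one_ne_zero hnorm1.symm
  · have hAx : Tendsto (fun n => A (x (φ n))) atTop (𝓝 (A xlim)) :=
      (A.continuous.tendsto _).comp hxc
    have := tendsto_nhds_unique hAx hconv
    rw [this, hy]

/-- Abstract quantitative stability of the first eigenspace via the energy–Casimir
method: if `T` is compact, self-adjoint and positive-definite with top two distinct
eigenvalues `Λ₁⁻¹ > Λ₂⁻¹ > 0` and `P₁` is the orthogonal projection onto the top
eigenspace, and if `v, w` have the same energy–Casimir `⟪·, T·⟫ - Λ₁⁻¹‖·‖²`, then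
`‖w - P₁w‖² ≤ (Λ₂/(Λ₂ - Λ₁)) ‖v - P₁v‖²`. -/
theorem energy_casimir_stability {H : Type*} [NormedAddCommGroup H]
    [InnerProductSpace ℝ H] [CompleteSpace H]
    (T : H →L[ℝ] H) (hcomp : IsCompactOperator T) (hsa : IsSelfAdjoint T)
    (hpos : ∀ v : H, v ≠ 0 → 0 < ⟪v, T v⟫)
    (Λ₁ Λ₂ : ℝ) (hΛ₁pos : 0 < Λ₁) (hlt : Λ₁ < Λ₂)
    (hμ₁ : Module.End.HasEigenvalue (T : H →ₗ[ℝ] H) Λ₁⁻¹)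
    (hμ₂ : Module.End.HasEigenvalue (T : H →ₗ[ℝ] H) Λ₂⁻¹)
    (hmax : ∀ μ' : ℝ, Module.End.HasEigenvalue (T : H →ₗ[ℝ] H) μ' → μ' ≤ Λ₁⁻¹)
    (hsecond : ∀ μ' : ℝ, Module.End.HasEigenvalue (T : H →ₗ[ℝ] H) μ' →
      μ' = Λ₁⁻¹ ∨ μ' ≤ Λ₂⁻¹)
    (E₁ : Submodule ℝ H) (hE₁ : E₁ = Module.End.eigenspace (T : H →ₗ[ℝ] H) Λ₁⁻¹)
    [E₁.HasOrthogonalProjection]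
    (v w : H)
    (hEC : ⟪v, T v⟫ - Λ₁⁻¹ * ‖v‖ ^ 2 = ⟪w, T w⟫ - Λ₁⁻¹ * ‖w‖ ^ 2) :
    ‖w - (E₁.orthogonalProjectionOnto w : H)‖ ^ 2 ≤
      (Λ₂ / (Λ₂ - Λ₁)) * ‖v - (E₁.orthogonalProjectionOnto v : H)‖ ^ 2 := by
  have hΛ₂pos : 0 < Λ₂ := lt_trans hΛ₁pos hlt
  have hsymm : ∀ a b : H, ⟪T a, b⟫ = ⟪a, T b⟫ := fun a b => hsa.isSymmetric a b
  -- the orthogonal complement is invariant under `T`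
  set K := E₁ᗮ with hK
  have hTE₁ : ∀ p : H, p ∈ E₁ → T p = Λ₁⁻¹ • p := by
    intro p hp
    rw [hE₁] at hp
    exact Module.End.mem_eigenspace_iff.mp hp
  have hinv : ∀ y : H, y ∈ K → T y ∈ K := by
    intro y hy
    rw [hK, Submodule.mem_orthogonal] at hy ⊢
    intro p hp
    have h1 : ⟪p, T y⟫ = Λ₁⁻¹ * ⟪p, y⟫ := by
      rw [← hsymm, hTE₁ p hp, real_inner_smul_left]
    rw [h1, hy p hp]
    ring
  -- restriction of `T` to `K`
  set A : K →L[ℝ] K := (T.comp K.subtypeL).codRestrict K (fun a => hinv a a.2) with hA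
  have hAapp : ∀ a : K, (A a : H) = T a := fun a => rfl
  have hsymA : ∀ a b : K, ⟪A a, b⟫ = ⟪a, A b⟫ := by
    intro a b
    rw [Submodule.coe_inner, Submodule.coe_inner, hAapp, hAapp]
    exact hsymm a b
  have hposA : ∀ a : K, 0 ≤ ⟪a, A a⟫ := by
    intro a
    rw [Submodule.coe_inner, hAapp]
    rcases eq_or_ne (a : H) 0 with h | h
    · simp [h]
    · exact (hpos a h).le
  have hcompA : IsCompactOperator A := by
    obtain ⟨C, hC, hCnhds⟩ := hcomp
    refine ⟨Subtype.val ⁻¹' C, ?_, ?_⟩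
    · exact (E₁.isClosed_orthogonal.isClosedEmbedding_subtypeVal).isCompact_preimage hC
    · have hcont : Continuous (Subtype.val : K → H) := continuous_subtype_val
      have h0 : (Subtype.val : K → H) 0 = 0 := rfl
      have := hcont.continuousAt (x := (0:K))
      have hmem : (fun a : K => T (a : H)) ⁻¹' C ∈ 𝓝 (0 : K) := by
        have : Subtype.val ⁻¹' (T ⁻¹' C) ∈ 𝓝 (0 : K) := by
          apply ContinuousAt.preimage_mem_nhds (hcont.continuousAt)
          rwa [h0]
        exact this
      exact hmem
  -- the key spectral bound on `K`
  have hbound : ∀ z : H, z ∈ K → ⟪z, T z⟫ ≤ Λ₂⁻¹ * ‖z‖ ^ 2 := by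
    intro z hz
    rcases eq_or_ne A 0 with hA0 | hA0
    · have : T z = 0 := by
        have := congrArg (fun f => (f ⟨z, hz⟩ : H)) hA0
        simpa [hAapp] using this
      rw [this, inner_zero_right]
      positivity
    · obtain ⟨xe, hxe0, hxeeq⟩ := aux_exists_eigenvector A hcompA hsymA hposA hA0
      have hxeH : (xe : H) ≠ 0 := fun h => hxe0 (Subtype.coe_injective h)
      have hTeq : T (xe : H) = ‖A‖ • (xe : H) := by
        have := congrArg (Subtype.val) hxeeq
        simpa [hAapp] using this
      have hTeq' : (T : H →ₗ[ℝ] H) (xe : H) = ‖A‖ • (xe : H) := by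
        simp only [ContinuousLinearMap.coe_coe]
        exact hTeq
      have hev : Module.End.HasEigenvalue (T : H →ₗ[ℝ] H) ‖A‖ := by
        apply Module.End.hasEigenvalue_of_hasEigenvector (x := (xe : H))
        exact ⟨Module.End.mem_eigenspace_iff.mpr hTeq', hxeH⟩
      have hμle : ‖A‖ ≤ Λ₂⁻¹ := by
        rcases hsecond _ hev with h | h
        · exfalso
          have hxE₁ : (xe : H) ∈ E₁ := by
            rw [hE₁]
            rw [Module.End.mem_eigenspace_iff]
            simp only [ContinuousLinearMap.coe_coe]
            rw [hTeq, h]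
          have hxK : (xe : H) ∈ E₁ᗮ := xe.2
          rw [Submodule.mem_orthogonal] at hxK
          have := hxK _ hxE₁
          rw [real_inner_self_eq_norm_sq] at this
          have : ‖(xe:H)‖ = 0 := by nlinarith [norm_nonneg (xe:H)]
          exact hxeH (norm_eq_zero.mp this)
        · exact h
      calc ⟪z, T z⟫ = ⟪(⟨z, hz⟩ : K), A ⟨z, hz⟩⟫ := by
            rw [Submodule.coe_inner, hAapp]
        _ ≤ ‖(⟨z, hz⟩ : K)‖ * ‖A ⟨z, hz⟩‖ := real_inner_le_norm _ _
        _ ≤ ‖(⟨z, hz⟩ : K)‖ * (‖A‖ * ‖(⟨z, hz⟩ : K)‖) :=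
            mul_le_mul_of_nonneg_left (A.le_opNorm _) (norm_nonneg _)
        _ = ‖A‖ * ‖z‖ ^ 2 := by
            have hzn : ‖(⟨z, hz⟩ : K)‖ = ‖z‖ := rfl
            rw [hzn]
            ring
        _ ≤ Λ₂⁻¹ * ‖z‖ ^ 2 := by
            nlinarith [sq_nonneg ‖z‖, hμle]
  -- reduction of the energy–Casimir to the orthogonal part
  have hdec : ∀ a : H, ⟪a, T a⟫ - Λ₁⁻¹ * ‖a‖ ^ 2
      = ⟪a - (E₁.orthogonalProjectionOnto a : H), T (a - (E₁.orthogonalProjectionOnto a : H))⟫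
        - Λ₁⁻¹ * ‖a - (E₁.orthogonalProjectionOnto a : H)‖ ^ 2 := by
    intro a
    set p : H := (E₁.orthogonalProjectionOnto a : H) with hp
    set u : H := a - p with hu
    have hpu : a = p + u := by rw [hu]; abel
    have huK : u ∈ K := E₁.sub_starProjection_mem_orthogonal a
    have hpE : p ∈ E₁ := (E₁.orthogonalProjectionOnto a).2
    have hTp : T p = Λ₁⁻¹ • p := hTE₁ p hpE
    have hpu0 : ⟪p, u⟫ = 0 := by
      rw [hK, Submodule.mem_orthogonal] at huK
      exact huK p hpE
    have hup0 : ⟪u, p⟫ = 0 := by rw [real_inner_comm]; exact hpu0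
    have hpTu : ⟪p, T u⟫ = 0 := by
      rw [← hsymm, hTp, real_inner_smul_left, hpu0]; ring
    have huTp : ⟪u, T p⟫ = 0 := by
      rw [hTp, real_inner_smul_right, hup0]; ring
    have hpTp : ⟪p, T p⟫ = Λ₁⁻¹ * ‖p‖ ^ 2 := by
      rw [hTp, real_inner_smul_right, real_inner_self_eq_norm_sq]
    have hnorm : ‖a‖ ^ 2 = ‖p‖ ^ 2 + ‖u‖ ^ 2 := by
      rw [hpu, norm_add_sq_real, hpu0]
      ring
    have hinner : ⟪a, T a⟫ = Λ₁⁻¹ * ‖p‖ ^ 2 + ⟪u, T u⟫ := by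
      conv_lhs => rw [hpu]
      rw [map_add, inner_add_left, inner_add_right, inner_add_right,
        hpTp, hpTu, huTp]
      ring
    rw [hinner, hnorm]
    ring
  -- put everything together
  set u : H := v - (E₁.orthogonalProjectionOnto v : H) with hudef
  set z : H := w - (E₁.orthogonalProjectionOnto w : H) with hzdef
  have huK : u ∈ K := E₁.sub_starProjection_mem_orthogonal v
  have hzK : z ∈ K := E₁.sub_starProjection_mem_orthogonal w
  have h1 : ⟪u, T u⟫ - Λ₁⁻¹ * ‖u‖ ^ 2 = ⟪z, T z⟫ - Λ₁⁻¹ * ‖z‖ ^ 2 := by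
    rw [← hdec v, ← hdec w]
    exact hEC
  have h2 : ⟪z, T z⟫ ≤ Λ₂⁻¹ * ‖z‖ ^ 2 := hbound z hzK
  have h3 : 0 ≤ ⟪u, T u⟫ := by
    rcases eq_or_ne u 0 with h | h
    · simp [h]
    · exact (hpos u h).le
  have h4 : (Λ₁⁻¹ - Λ₂⁻¹) * ‖z‖ ^ 2 ≤ Λ₁⁻¹ * ‖u‖ ^ 2 := by nlinarith [h1, h2, h3]
  rw [div_mul_eq_mul_div, le_div_iff₀ (by linarith : (0:ℝ) < Λ₂ - Λ₁)]
  have hΛ₁ne : Λ₁ ≠ 0 := ne_of_gt hΛ₁pos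
  have hΛ₂ne : Λ₂ ≠ 0 := ne_of_gt hΛ₂pos
  have h5 : (Λ₂ - Λ₁) * ‖z‖ ^ 2 ≤ Λ₂ * ‖u‖ ^ 2 := by
    have h6 := mul_le_mul_of_nonneg_left h4 (le_of_lt (mul_pos hΛ₁pos hΛ₂pos))
    calc (Λ₂ - Λ₁) * ‖z‖ ^ 2 = Λ₁ * Λ₂ * ((Λ₁⁻¹ - Λ₂⁻¹) * ‖z‖ ^ 2) := by
          field_simp
      _ ≤ Λ₁ * Λ₂ * (Λ₁⁻¹ * ‖u‖ ^ 2) := h6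
      _ = Λ₂ * ‖u‖ ^ 2 := by
          field_simp
  linarith [h5]
end

section
/- Let V be a finite-dimensional inner product space with orthogonal unit-norm-scaled basis vectors e₀, e₁, e₂ (pairwise orthogonal, with ‖e₁‖ = ‖e₂‖). Define the orbit O = {A e₀ + B(cos α · e₁ + sin α · e₂) : α ∈ ℝ} for fixed A ∈ ℝ, B ≥ 0. If w = A' e₀ + B'(cos α' · e₁ + sin α' · e₂) with B' ≥ 0 satisfies ‖w - v‖ = dist(w, O) for some v = A e₀ + B(cos α e₁ + sin α e₂) ∈ O, then ‖w - v‖² = (A - A')² ‖e₀‖² + (B - B')² ‖e₁‖². -/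
/-!
The orbit is a circle of radius `B` in the plane spanned by `e₁, e₂`, translated along the
orthogonal direction `e₀`. By Pythagoras and the law of cosines the squared distance from `w`
to the orbit point at angle `β` is `(A - A')² ‖e₀‖² + (B² + B'² - 2 B B' cos (α' - β)) ‖e₁‖²`.
As `B B' ≥ 0` this is smallest at `β = α'`, where it equals the claimed value, and a closest
point cannot do better than that minimum.
-/

open scoped RealInnerProductSpace

section Circle

variable {V : Type*} [NormedAddCommGroup V] [InnerProductSpace ℝ V] {e₁ e₂ : V}

theorem inner_cos_smul_add_sin_smul (h12 : ⟪e₁, e₂⟫ = 0) (hnorm : ‖e₁‖ = ‖e₂‖) (a b : ℝ) :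
    ⟪Real.cos a • e₁ + Real.sin a • e₂, Real.cos b • e₁ + Real.sin b • e₂⟫ =
      Real.cos (a - b) * ‖e₁‖ ^ 2 := by
  have h21 : ⟪e₂, e₁⟫ = 0 := by rwa [real_inner_comm]
  simp only [inner_add_left, inner_add_right, real_inner_smul_left, real_inner_smul_right,
    h12, h21, real_inner_self_eq_norm_sq, ← hnorm, Real.cos_sub]
  ring

theorem norm_smul_circle_sub_smul_circle_sq (h12 : ⟪e₁, e₂⟫ = 0) (hnorm : ‖e₁‖ = ‖e₂‖)
    (r s a b : ℝ) :
    ‖r • (Real.cos a • e₁ + Real.sin a • e₂) - s • (Real.cos b • e₁ + Real.sin b • e₂)‖ ^ 2 =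
      (r ^ 2 + s ^ 2 - 2 * r * s * Real.cos (a - b)) * ‖e₁‖ ^ 2 := by
  rw [norm_sub_sq_real, ← real_inner_self_eq_norm_sq, ← real_inner_self_eq_norm_sq]
  simp only [real_inner_smul_left, real_inner_smul_right,
    inner_cos_smul_add_sin_smul h12 hnorm, sub_self, Real.cos_zero]
  ring

end Circle

theorem norm_cylindrical_sub_cylindrical_sq {V : Type*} [NormedAddCommGroup V]
    [InnerProductSpace ℝ V] {e₀ e₁ e₂ : V}
    (h01 : ⟪e₀, e₁⟫ = 0) (h02 : ⟪e₀, e₂⟫ = 0) (h12 : ⟪e₁, e₂⟫ = 0) (hnorm : ‖e₁‖ = ‖e₂‖)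
    (a a' r r' θ θ' : ℝ) :
    ‖(a' • e₀ + r' • (Real.cos θ' • e₁ + Real.sin θ' • e₂)) -
        (a • e₀ + r • (Real.cos θ • e₁ + Real.sin θ • e₂))‖ ^ 2 =
      (a' - a) ^ 2 * ‖e₀‖ ^ 2 + (r' ^ 2 + r ^ 2 - 2 * r' * r * Real.cos (θ' - θ)) * ‖e₁‖ ^ 2 := by
  have hsplit : (a' • e₀ + r' • (Real.cos θ' • e₁ + Real.sin θ' • e₂)) -
        (a • e₀ + r • (Real.cos θ • e₁ + Real.sin θ • e₂)) =
      (a' - a) • e₀ + (r' • (Real.cos θ' • e₁ + Real.sin θ' • e₂) -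
        r • (Real.cos θ • e₁ + Real.sin θ • e₂)) := by
    module
  have horth : ⟪(a' - a) • e₀, r' • (Real.cos θ' • e₁ + Real.sin θ' • e₂) -
      r • (Real.cos θ • e₁ + Real.sin θ • e₂)⟫ = 0 := by
    simp only [inner_sub_right, inner_add_right, real_inner_smul_left, real_inner_smul_right,
      h01, h02]
    ring
  rw [hsplit, norm_add_sq_real, horth,
    norm_smul_circle_sub_smul_circle_sq h12 hnorm, norm_smul, mul_pow, Real.norm_eq_abs, sq_abs]
  ring

theorem dist_to_orbit_of_closest_general {V : Type*} [NormedAddCommGroup V]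
    [InnerProductSpace ℝ V]
    (e₀ e₁ e₂ : V)
    (h01 : ⟪e₀, e₁⟫ = 0) (h02 : ⟪e₀, e₂⟫ = 0) (h12 : ⟪e₁, e₂⟫ = 0)
    (hnorm : ‖e₁‖ = ‖e₂‖)
    (A A' B B' α α' : ℝ) (hB : 0 ≤ B) (hB' : 0 ≤ B')
    (O : Set V)
    (hO : O = {u : V | ∃ β : ℝ, u = A • e₀ + B • (Real.cos β • e₁ + Real.sin β • e₂)})
    (v w : V)
    (hv : v = A • e₀ + B • (Real.cos α • e₁ + Real.sin α • e₂))
    (hw : w = A' • e₀ + B' • (Real.cos α' • e₁ + Real.sin α' • e₂))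
    (hclosest : ‖w - v‖ = Metric.infDist w O) :
    ‖w - v‖ ^ 2 = (A - A') ^ 2 * ‖e₀‖ ^ 2 + (B - B') ^ 2 * ‖e₁‖ ^ 2 := by
  set u := A • e₀ + B • (Real.cos α' • e₁ + Real.sin α' • e₂)
  have hu : ‖w - u‖ ^ 2 = (A - A') ^ 2 * ‖e₀‖ ^ 2 + (B - B') ^ 2 * ‖e₁‖ ^ 2 := by
    rw [hw, norm_cylindrical_sub_cylindrical_sq h01 h02 h12 hnorm, sub_self, Real.cos_zero]
    ring
  have hvu : ‖w - v‖ ≤ ‖w - u‖ := by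
    rw [hclosest, ← dist_eq_norm]
    exact Metric.infDist_le_dist_of_mem (hO ▸ ⟨α', rfl⟩)
  have hcos : 0 ≤ B * B' * (1 - Real.cos (α' - α)) * ‖e₁‖ ^ 2 :=
    mul_nonneg (mul_nonneg (mul_nonneg hB hB') (sub_nonneg.2 (Real.cos_le_one _))) (sq_nonneg _)
  refine le_antisymm (hu ▸ pow_le_pow_left₀ (norm_nonneg _) hvu 2) ?_
  rw [hv, hw, norm_cylindrical_sub_cylindrical_sq h01 h02 h12 hnorm]
  linarith

/-- Let `e₀, e₁, e₂` be pairwise orthogonal nonzero vectors with `‖e₁‖ = ‖e₂‖` in a real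
inner product space, and let `O = {A e₀ + B (cos α e₁ + sin α e₂) : α ∈ ℝ}` for fixed
`A ∈ ℝ`, `B ≥ 0`.  If `w = A' e₀ + B' (cos α' e₁ + sin α' e₂)` with `B' ≥ 0` realizes its
distance to `O` at `v = A e₀ + B (cos α e₁ + sin α e₂) ∈ O`, then
`‖w - v‖² = (A - A')² ‖e₀‖² + (B - B')² ‖e₁‖²`. -/
theorem dist_to_orbit_of_closest {V : Type*} [NormedAddCommGroup V]
    [InnerProductSpace ℝ V]
    (e₀ e₁ e₂ : V) (he₀ : e₀ ≠ 0) (he₁ : e₁ ≠ 0) (he₂ : e₂ ≠ 0)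
    (h01 : ⟪e₀, e₁⟫ = 0) (h02 : ⟪e₀, e₂⟫ = 0) (h12 : ⟪e₁, e₂⟫ = 0)
    (hnorm : ‖e₁‖ = ‖e₂‖)
    (A A' B B' α α' : ℝ) (hB : 0 ≤ B) (hB' : 0 ≤ B')
    (O : Set V)
    (hO : O = {u : V | ∃ β : ℝ, u = A • e₀ + B • (Real.cos β • e₁ + Real.sin β • e₂)})
    (v w : V)
    (hv : v = A • e₀ + B • (Real.cos α • e₁ + Real.sin α • e₂))
    (hw : w = A' • e₀ + B' • (Real.cos α' • e₁ + Real.sin α' • e₂))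
    (hclosest : ‖w - v‖ = Metric.infDist w O) :
    ‖w - v‖ ^ 2 = (A - A') ^ 2 * ‖e₀‖ ^ 2 + (B - B') ^ 2 * ‖e₁‖ ^ 2 :=
  dist_to_orbit_of_closest_general e₀ e₁ e₂ h01 h02 h12 hnorm A A' B B' α α' hB hB' O hO v w hv hw
    hclosest
end
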